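/- Let G be a finite group, φ : G → G an endomorphism, and let W be the complex vector space of class functions on G (complex-valued functions constant on each conjugacy class). The map B : W → W defined by B(f) = f∘φ is linear, and the Reidemeister number satisfies R(φ) = Tr B. -/

import Mathlib

/-- The set of Reidemeister (`φ`-twisted conjugacy) classes of an endomorphism `φ` of a
group `G`: `α'` is `φ`-conjugate to `α` iff `α' = γ * α * (φ γ)⁻¹` for some `γ ∈ G`. -/
def ReidemeisterSet {G : Type*} [Group G] (φ : G →* G) : Type _ :=
  Quot (fun a b : G => ∃ γ : G, b = γ * a * (φ γ)⁻¹)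

/-- The space `W` of complex-valued class functions on `G`. -/
noncomputable def classFunctions (G : Type*) [Group G] : Submodule ℂ (G → ℂ) where
  carrier := {f | ∀ x y : G, f (y * x * y⁻¹) = f x}
  add_mem' := by
    intro f g hf hg x y
    simp only [Pi.add_apply, hf x y, hg x y]
  zero_mem' := by
    intro x y
    rfl
  smul_mem' := by
    intro c f hf x y
    simp only [Pi.smul_apply, hf x y]

/-- The linear map `B : W → W`, `B(f) = f ∘ φ`, on class functions. -/
noncomputable def pullbackClassFun {G : Type*} [Group G] (φ : G →* G) :
    classFunctions G →ₗ[ℂ] classFunctions G where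
  toFun f := ⟨fun g => f.1 (φ g), by
    intro x y
    simp only [map_mul, map_inv]
    exact f.2 (φ x) (φ y)⟩
  map_add' f g := rfl
  map_smul' c f := rfl

/-!
Burnside's lemma for the twisted action `γ • a = γ a φ(γ)⁻¹` gives
`|G| · R(φ) = ∑_γ #{a | a φ(γ) a⁻¹ = γ}`. If `φ` maps the conjugacy class `c` of `x` into itself,
then for `γ ∈ c` this count equals `#{a | a x a⁻¹ = γ}`, and these fibres of `a ↦ a x a⁻¹`
partition `G`; otherwise every count over `c` vanishes. Hence `R(φ)` is the number of conjugacy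
classes fixed by `φ`. On the other side, class functions are the functions on conjugacy classes,
`B` becomes the pullback along `c ↦ φ(c)`, and the trace of the pullback along a self-map of a
finite set is its number of fixed points.
-/

open MulAction

namespace MulAction
variable {M X : Type*} [Group M] [MulAction M X]

theorem natCard_smul_eq_of_mem_orbit {x x' : X} (hx' : x' ∈ orbit M x) (y : X) :
    Nat.card {g : M // g • x' = y} = Nat.card {g : M // g • x = y} := by
  obtain ⟨h, rfl⟩ := hx'
  exact Nat.card_congr ((Equiv.mulRight h).subtypeEquiv fun g => by simp [mul_smul])

theorem sum_natCard_smul_eq [Finite M] (x : X) [Fintype (orbit M x)] :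
    ∑ y : orbit M x, Nat.card {g : M // g • x = y} = Nat.card M := by
  rw [← Nat.card_sigma]
  exact Nat.card_congr <|
    (Equiv.sigmaCongrRight fun _ => Equiv.subtypeEquivRight fun _ => Subtype.ext_iff.symm).trans
      (Equiv.sigmaFiberEquiv fun g : M => (⟨g • x, mem_orbit x g⟩ : orbit M x))

end MulAction

theorem LinearMap.trace_funLeft {R n : Type*} [CommRing R] [Fintype n] (f : n → n) :
    trace R (n → R) (funLeft R R f) = Nat.card {i // f i = i} := by
  classical
  rw [trace_eq_matrix_trace R (Pi.basisFun R n), Matrix.trace, Nat.card_eq_fintype_card,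
    Fintype.card_subtype, Finset.card_filter, Nat.cast_sum]
  refine Finset.sum_congr rfl fun i _ => ?_
  simp [Pi.single_apply]

theorem sum_natCard_conjAct_smul_apply_eq {G : Type*} [Group G] [Fintype G]
    [DecidableEq (ConjClasses G)] (φ : G →* G) (c : ConjClasses G) :
    ∑ γ : {γ : G // ConjClasses.mk γ = c}, Nat.card {a : ConjAct G // a • φ γ = γ} =
      if ConjClasses.map φ c = c then Nat.card G else 0 := by
  classical
  obtain ⟨x, rfl⟩ := ConjClasses.mk_surjective c
  have mk_apply (γ : {γ : G // ConjClasses.mk γ = ConjClasses.mk x}) :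
      ConjClasses.mk (φ γ) = ConjClasses.map φ (ConjClasses.mk x) :=
    congrArg (ConjClasses.map φ) γ.2
  split_ifs with hfix
  · have hφγ (γ : {γ : G // ConjClasses.mk γ = ConjClasses.mk x}) :
        φ γ ∈ orbit (ConjAct G) x := by
      rw [ConjAct.mem_orbit_conjAct, ← ConjClasses.mk_eq_mk_iff_isConj, mk_apply, hfix]
    calc _ = ∑ γ : {γ : G // ConjClasses.mk γ = ConjClasses.mk x},
          Nat.card {a : ConjAct G // a • x = γ} :=
          Fintype.sum_congr _ _ fun γ => natCard_smul_eq_of_mem_orbit (hφγ γ) γ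
      _ = ∑ y : orbit (ConjAct G) x, Nat.card {a : ConjAct G // a • x = y} :=
          Fintype.sum_equiv (Equiv.subtypeEquivRight fun γ => by
            rw [ConjAct.orbit_eq_carrier_conjClasses, ConjClasses.mem_carrier_iff_mk_eq]) _ _
            fun _ => rfl
      _ = Nat.card G := by rw [sum_natCard_smul_eq]; rfl
  · refine Finset.sum_eq_zero fun γ _ => @Nat.card_of_isEmpty _ ⟨fun ⟨a, ha⟩ => hfix ?_⟩
    have hconj : IsConj (γ : G) (φ γ) := ConjAct.mem_orbit_conjAct.mp ⟨a, ha⟩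
    exact (mk_apply γ).symm.trans ((ConjClasses.mk_eq_mk_iff_isConj.mpr hconj).symm.trans γ.2)

def TwistedConj {G : Type*} [Group G] (_φ : G →* G) : Type _ := G

namespace TwistedConj
variable {G : Type*} [Group G] (φ : G →* G)

def of : G ≃ TwistedConj φ := Equiv.refl G

instance : MulAction G (TwistedConj φ) where
  smul γ a := of φ (γ * (of φ).symm a * (φ γ)⁻¹)
  one_smul a := by
    show of φ (1 * (of φ).symm a * (φ 1)⁻¹) = a
    simp
  mul_smul γ δ a := by
    show of φ (γ * δ * (of φ).symm a * (φ (γ * δ))⁻¹) =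
      of φ (γ * (of φ).symm (of φ (δ * (of φ).symm a * (φ δ)⁻¹)) * (φ γ)⁻¹)
    simp [mul_assoc]

theorem smul_of (γ a : G) : γ • of φ a = of φ (γ * a * (φ γ)⁻¹) := rfl

theorem smul_of_eq_of_iff (γ a b : G) : γ • of φ a = of φ b ↔ b = γ * a * (φ γ)⁻¹ := by
  rw [smul_of, (of φ).apply_eq_iff_eq, eq_comm]

instance [Fintype G] : Fintype (TwistedConj φ) := inferInstanceAs (Fintype G)

def reidemeisterSetEquivOrbits : ReidemeisterSet φ ≃ orbitRel.Quotient G (TwistedConj φ) :=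
  Quot.congr (of φ) fun a b => by
    rw [orbitRel_apply, mem_orbit_symm, mem_orbit_iff]
    simp only [smul_of_eq_of_iff]

theorem mem_fixedBy_of_iff (γ a : G) :
    of φ a ∈ fixedBy (TwistedConj φ) γ ↔ ConjAct.toConjAct a • φ γ = γ := by
  rw [mem_fixedBy, smul_of_eq_of_iff, ConjAct.smul_def, ConjAct.ofConjAct_toConjAct,
    eq_mul_inv_iff_mul_eq, mul_inv_eq_iff_eq_mul, eq_comm]

theorem natCard_fixedBy (γ : G) :
    Nat.card (fixedBy (TwistedConj φ) γ) = Nat.card {a : ConjAct G // a • φ γ = γ} := by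
  refine Nat.card_congr (((ConjAct.ofConjAct.toEquiv.trans (of φ)).subtypeEquiv fun a => ?_).symm)
  rw [MulEquiv.toEquiv_eq_coe, Equiv.trans_apply, MulEquiv.coe_toEquiv, mem_fixedBy_of_iff,
    ConjAct.toConjAct_ofConjAct]

theorem sum_natCard_fixedBy [Fintype G] :
    ∑ γ : G, Nat.card (fixedBy (TwistedConj φ) γ) =
      Nat.card {c : ConjClasses G // ConjClasses.map φ c = c} * Nat.card G := by
  classical
  calc _ = ∑ c : ConjClasses G, ∑ γ : {γ : G // ConjClasses.mk γ = c},
        Nat.card {a : ConjAct G // a • φ γ = γ} := by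
        simp only [natCard_fixedBy]
        exact (Fintype.sum_fiberwise _ _).symm
    _ = ∑ c : ConjClasses G, if ConjClasses.map φ c = c then Nat.card G else 0 :=
        Fintype.sum_congr _ _ (sum_natCard_conjAct_smul_apply_eq φ)
    _ = _ := by
        rw [Finset.sum_ite, Finset.sum_const_zero, add_zero, Finset.sum_const, smul_eq_mul,
          ← Fintype.card_subtype, Fintype.card_eq_nat_card]

end TwistedConj

theorem natCard_reidemeisterSet {G : Type*} [Group G] [Fintype G] (φ : G →* G) :
    Nat.card (ReidemeisterSet φ) = Nat.card {c : ConjClasses G // ConjClasses.map φ c = c} := by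
  classical
  have burnside := sum_card_fixedBy_eq_card_orbits_mul_card_group G (TwistedConj φ)
  simp only [← Nat.card_eq_fintype_card] at burnside
  rw [Nat.card_congr (TwistedConj.reidemeisterSetEquivOrbits φ)]
  exact Nat.eq_of_mul_eq_mul_right Nat.card_pos
    (burnside.symm.trans (TwistedConj.sum_natCard_fixedBy φ))

noncomputable def classFunctionsEquiv (G : Type*) [Group G] :
    classFunctions G ≃ₗ[ℂ] (ConjClasses G → ℂ) where
  toFun f := Quotient.lift f.1 fun a b hab => by
    obtain ⟨g, rfl⟩ := isConj_iff.mp hab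
    exact (f.2 a g).symm
  map_add' f g := funext <| ConjClasses.forall_isConj.2 fun _ => rfl
  map_smul' r f := funext <| ConjClasses.forall_isConj.2 fun _ => rfl
  invFun h := ⟨h ∘ ConjClasses.mk, fun x y =>
    congrArg h <| ConjClasses.mk_eq_mk_iff_isConj.2 (isConj_iff.2 ⟨y, rfl⟩).symm⟩
  left_inv f := rfl
  right_inv h := funext <| ConjClasses.forall_isConj.2 fun _ => rfl

theorem classFunctionsEquiv_conj_pullbackClassFun {G : Type*} [Group G] (φ : G →* G) :
    (classFunctionsEquiv G).conj (pullbackClassFun φ) =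
      LinearMap.funLeft ℂ ℂ (ConjClasses.map φ) :=
  LinearMap.ext fun _ => funext <| ConjClasses.forall_isConj.2 fun _ => rfl

/-- trace formula. For an endomorphism `φ` of a finite group `G` and the
linear map `B(f) = f ∘ φ` on the space of complex class functions, `R(φ) = Tr B`. -/
theorem reidemeister_number_eq_trace_pullback {G : Type*} [Group G] [Fintype G]
    (φ : G →* G) :
    (Nat.card (ReidemeisterSet φ) : ℂ) =
      LinearMap.trace ℂ (classFunctions G) (pullbackClassFun φ) := by
  classical
  rw [natCard_reidemeisterSet,
    ← LinearMap.trace_conj' (pullbackClassFun φ) (classFunctionsEquiv G),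
    classFunctionsEquiv_conj_pullbackClassFun, LinearMap.trace_funLeft]
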